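/- arXiv:2507.15775 — 3 statements merged into one kernel-verified Lean document; each statement's English description precedes it below -/
import Mathlib

section
/- Let R > 0 and let γ : ℝ → EuclideanSpace ℝ (Fin 2) be twice continuously differentiable, and suppose there is a continuous function c : ℝ → ℝ with c(t) ≥ 0 and γ''(t) = −c(t) • γ(t) for all t (an attractive central force directed toward the origin). Let T > 0, assume γ'(t) ≠ 0 for all t ∈ [0, T], that ‖γ(t)‖ < R for all t ∈ [0, T), and that ‖γ(T)‖ = R (T is the first time the trajectory reaches the boundary sphere). Let s* be the smallest nonnegative real number with ‖γ(0) + s* • (γ'(0)/‖γ'(0)‖)‖ = R (the distance from A = γ(0) along the straight ray in the initial direction to the boundary sphere). Then the arclength of the trajectory satisfies ∫₀ᵀ ‖γ'(t)‖ dt ≥ s*. -/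
/-!
Write `p = ⟪γ, γ'⟫` and `S` for arclength. Along `γ'' = -c • γ` the derivative of `p / ‖γ'‖` is
`‖γ'‖ - c (‖γ‖² ‖γ'‖² - p²) / ‖γ'‖³ ≤ ‖γ'‖`, so `p / ‖γ'‖ - S` is nonincreasing: the attraction
only bends the trajectory toward the centre. Feeding `p ≤ (p₀ / ‖γ'₀‖ + S) ‖γ'‖` into
`(‖γ‖²)' = 2p` gives `‖γ t‖ ≤ ‖γ 0 + S t • u‖`, with `u` the initial unit direction: the trajectory
is never farther out than the straight ray after the same arclength. At the exit time the point
of the ray at distance `S T` is therefore outside the open ball, and convexity of the norm along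
the ray gives `s* ≤ S T`.
-/

open scoped RealInnerProductSpace

open Set

/-- If `s > L`, then `x + L • u` is a convex combination of `x` and `x + s • u`, hence strictly
inside the ball of radius `R`. -/
theorem le_of_norm_add_smul_eq_of_le_norm_add_smul {E : Type*} [NormedAddCommGroup E]
    [NormedSpace ℝ E] {x u : E} {R s L : ℝ} (hx : ‖x‖ < R)
    (hs : ‖x + s • u‖ = R) (hL : 0 ≤ L) (hRL : R ≤ ‖x + L • u‖) : s ≤ L := by
  by_contra! hLs
  have hs0 : 0 < s := hL.trans_lt hLs
  set θ := L / s
  have hθ0 : 0 ≤ θ := div_nonneg hL hs0.le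
  have hθ1 : 0 < 1 - θ := sub_pos.2 ((div_lt_one hs0).2 hLs)
  have hcomb : x + L • u = (1 - θ) • x + θ • (x + s • u) := by
    rw [smul_add, smul_smul, div_mul_cancel₀ L hs0.ne']
    module
  have : ‖x + L • u‖ < R :=
    calc ‖x + L • u‖ ≤ (1 - θ) * ‖x‖ + θ * ‖x + s • u‖ := by
          rw [hcomb]
          refine (norm_add_le _ _).trans_eq ?_
          rw [norm_smul, norm_smul, Real.norm_of_nonneg hθ1.le, Real.norm_of_nonneg hθ0]
      _ < (1 - θ) * R + θ * R := by rw [hs]; gcongr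
      _ = R := by ring
  linarith

section CentralForce

variable {E : Type*} [NormedAddCommGroup E] [InnerProductSpace ℝ E]

theorem HasDerivAt.norm_of_ne_zero {f : ℝ → E} {f' : E} {t : ℝ} (hf : HasDerivAt f f' t)
    (h0 : f t ≠ 0) : HasDerivAt (fun s => ‖f s‖) (⟪f t, f'⟫ / ‖f t‖) t := by
  have h := hf.norm_sq.sqrt (pow_ne_zero 2 (norm_ne_zero_iff.2 h0))
  simp only [Real.sqrt_sq (norm_nonneg _)] at h
  convert h using 1
  field_simp

theorem hasDerivAt_inner_div_norm_of_central_force {γ v : ℝ → E} {c t : ℝ}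
    (hγ : HasDerivAt γ (v t) t) (hv : HasDerivAt v (-c • γ t) t) (h0 : v t ≠ 0) :
    HasDerivAt (fun s => ⟪γ s, v s⟫ / ‖v s‖)
      (‖v t‖ - c * (‖γ t‖ ^ 2 * ‖v t‖ ^ 2 - ⟪γ t, v t⟫ ^ 2) / ‖v t‖ ^ 3) t := by
  have hn : ‖v t‖ ≠ 0 := norm_ne_zero_iff.2 h0
  refine ((hγ.inner ℝ hv).div (hv.norm_of_ne_zero h0) hn).congr_deriv ?_
  simp only [real_inner_smul_right, real_inner_self_eq_norm_sq, real_inner_comm (γ t)]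
  field_simp
  ring

theorem antitoneOn_Icc_of_hasDerivAt_nonpos {f f' : ℝ → ℝ} {a b : ℝ}
    (hf : ∀ x ∈ Icc a b, HasDerivAt f (f' x) x) (hf' : ∀ x ∈ Ioo a b, f' x ≤ 0) :
    AntitoneOn f (Icc a b) := by
  refine antitoneOn_of_hasDerivWithinAt_nonpos (convex_Icc a b)
    (continuousOn_of_forall_continuousAt fun x hx => (hf x hx).continuousAt) (fun x hx => ?_)
    (fun x hx => hf' x (by rwa [interior_Icc] at hx))
  rw [interior_Icc] at hx ⊢
  exact (hf x (Ioo_subset_Icc_self hx)).hasDerivWithinAt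

variable {γ v : ℝ → E} {c : ℝ → ℝ} {a b : ℝ}

/-- The derivative of `⟪γ, v⟫ / ‖v‖` is `‖v‖` minus `c` times a Cauchy–Schwarz defect. -/
theorem antitoneOn_inner_div_norm_sub_arclength
    (hγ : ∀ t ∈ Icc a b, HasDerivAt γ (v t) t) (hv : ∀ t, HasDerivAt v (-c t • γ t) t)
    (hc : ∀ t ∈ Icc a b, 0 ≤ c t) (h0 : ∀ t ∈ Icc a b, v t ≠ 0) :
    AntitoneOn (fun t => ⟪γ t, v t⟫ / ‖v t‖ - ∫ s in a..t, ‖v s‖) (Icc a b) := by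
  have hvc : Continuous v := continuous_iff_continuousAt.2 fun t => (hv t).continuousAt
  refine antitoneOn_Icc_of_hasDerivAt_nonpos (fun t ht =>
    (hasDerivAt_inner_div_norm_of_central_force (hγ t ht) (hv t) (h0 t ht)).sub
      (hvc.norm.integral_hasStrictDerivAt a t).hasDerivAt) fun t ht => ?_
  have ht' := Ioo_subset_Icc_self ht
  have hn : 0 < ‖v t‖ := norm_pos_iff.2 (h0 t ht')
  have hCS : ⟪γ t, v t⟫ ^ 2 ≤ ‖γ t‖ ^ 2 * ‖v t‖ ^ 2 := by
    rw [← mul_pow]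
    exact sq_le_sq' (neg_le_of_abs_le (abs_real_inner_le_norm _ _)) (real_inner_le_norm _ _)
  have : 0 ≤ c t * (‖γ t‖ ^ 2 * ‖v t‖ ^ 2 - ⟪γ t, v t⟫ ^ 2) / ‖v t‖ ^ 3 := by
    have := hc t ht'
    have : 0 ≤ ‖γ t‖ ^ 2 * ‖v t‖ ^ 2 - ⟪γ t, v t⟫ ^ 2 := sub_nonneg.2 hCS
    positivity
  linarith

theorem norm_le_norm_add_arclength_smul_initial_direction
    (hγ : ∀ t ∈ Icc a b, HasDerivAt γ (v t) t) (hv : ∀ t, HasDerivAt v (-c t • γ t) t)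
    (hc : ∀ t ∈ Icc a b, 0 ≤ c t) (h0 : ∀ t ∈ Icc a b, v t ≠ 0) {t : ℝ} (ht : t ∈ Icc a b) :
    ‖γ t‖ ≤ ‖γ a + (∫ s in a..t, ‖v s‖) • (‖v a‖⁻¹ • v a)‖ := by
  have hvc : Continuous v := continuous_iff_continuousAt.2 fun t => (hv t).continuousAt
  have ha : a ∈ Icc a b := left_mem_Icc.2 (ht.1.trans ht.2)
  set u := ‖v a‖⁻¹ • v a
  set S := fun t => ∫ s in a..t, ‖v s‖
  have hu : ‖u‖ = 1 := norm_smul_inv_norm (h0 a ha)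
  have hradial : ∀ t ∈ Icc a b, ⟪γ t, v t⟫ ≤ (⟪γ a, u⟫ + S t) * ‖v t‖ := by
    intro t ht
    have h := antitoneOn_inner_div_norm_sub_arclength hγ hv hc h0 ha ht ht.1
    simp only [intervalIntegral.integral_same, sub_zero] at h
    rw [← div_le_iff₀ (norm_pos_iff.2 (h0 t ht)), real_inner_smul_right, inv_mul_eq_div]
    linarith
  have hmono : AntitoneOn (fun t => ‖γ t‖ ^ 2 - ‖γ a + S t • u‖ ^ 2) (Icc a b) := by
    refine antitoneOn_Icc_of_hasDerivAt_nonpos (fun t ht => (hγ t ht).norm_sq.sub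
      (((hvc.norm.integral_hasStrictDerivAt a t).hasDerivAt.smul_const u).const_add
        (γ a)).norm_sq) fun t ht => ?_
    rw [real_inner_smul_right, inner_add_left, real_inner_smul_left, real_inner_self_eq_norm_sq,
      hu]
    have := hradial t (Ioo_subset_Icc_self ht)
    linarith
  have h := hmono ha ht ht.1
  simp only [S, intervalIntegral.integral_same, zero_smul, add_zero, sub_self] at h
  exact pow_le_pow_iff_left₀ (norm_nonneg _) (norm_nonneg _) two_ne_zero |>.1 (by linarith)

end CentralForce

theorem arclength_ge_straight_exit_distance_general
    (R : ℝ)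
    (γ : ℝ → EuclideanSpace ℝ (Fin 2)) (hγ : ContDiff ℝ 2 γ)
    (c : ℝ → ℝ) (hc0 : ∀ t, 0 ≤ c t)
    (hODE : ∀ t, deriv (deriv γ) t = -c t • γ t)
    (T : ℝ) (hT : 0 < T)
    (hv : ∀ t ∈ Set.Icc (0 : ℝ) T, deriv γ t ≠ 0)
    (hin : ∀ t ∈ Set.Ico (0 : ℝ) T, ‖γ t‖ < R)
    (hbd : ‖γ T‖ = R)
    (sStar : ℝ)
    (hsStar : IsLeast
      {s : ℝ | 0 ≤ s ∧ ‖γ 0 + s • (‖deriv γ 0‖⁻¹ • deriv γ 0)‖ = R} sStar) :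
    sStar ≤ ∫ t in (0 : ℝ)..T, ‖deriv γ t‖ := by
  obtain ⟨hγ1, -, hγ2⟩ := contDiff_succ_iff_deriv.1 (show ContDiff ℝ (1 + 1) γ from hγ)
  have hγ' : ∀ t, HasDerivAt (deriv γ) (-c t • γ t) t := fun t =>
    hODE t ▸ ((hγ2.differentiable one_ne_zero) t).hasDerivAt
  have hcomp := norm_le_norm_add_arclength_smul_initial_direction
    (fun t _ => (hγ1 t).hasDerivAt) hγ' (fun t _ => hc0 t) hv (right_mem_Icc.2 hT.le)
  exact le_of_norm_add_smul_eq_of_le_norm_add_smul (hin 0 (left_mem_Ico.2 hT)) hsStar.1.2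
    (intervalIntegral.integral_nonneg hT.le fun _ _ => norm_nonneg _) (hbd ▸ hcomp)

/-- **Proposition 1.** For a planar trajectory under an attractive central force
directed toward the origin, the straight-line distance from the start point (in the
initial direction) to the boundary sphere of radius `R` is a lower bound for the
arclength of the trajectory up to its first boundary crossing. -/
theorem arclength_ge_straight_exit_distance
    (R : ℝ) (hR : 0 < R)
    (γ : ℝ → EuclideanSpace ℝ (Fin 2)) (hγ : ContDiff ℝ 2 γ)
    (c : ℝ → ℝ) (hc : Continuous c) (hc0 : ∀ t, 0 ≤ c t)
    (hODE : ∀ t, deriv (deriv γ) t = -c t • γ t)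
    (T : ℝ) (hT : 0 < T)
    (hv : ∀ t ∈ Set.Icc (0 : ℝ) T, deriv γ t ≠ 0)
    (hin : ∀ t ∈ Set.Ico (0 : ℝ) T, ‖γ t‖ < R)
    (hbd : ‖γ T‖ = R)
    (sStar : ℝ)
    (hsStar : IsLeast
      {s : ℝ | 0 ≤ s ∧ ‖γ 0 + s • (‖deriv γ 0‖⁻¹ • deriv γ 0)‖ = R} sStar) :
    sStar ≤ ∫ t in (0 : ℝ)..T, ‖deriv γ t‖ :=
  arclength_ge_straight_exit_distance_general R γ hγ c hc0 hODE T hT hv hin hbd sStar hsStar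
end

section
/- Let R > 0 and let γ : ℝ → EuclideanSpace ℝ (Fin 2) be twice continuously differentiable with γ''(t) = −c(t) • γ(t) for a continuous c ≥ 0, let T > 0 with γ'(t) ≠ 0 for all t ∈ [0, T], ‖γ(t)‖ < R for all t ∈ [0, T), and ‖γ(T)‖ = R. Define the arclength function σ(t) = ∫₀ᵗ ‖γ'(u)‖ du and L = σ(T), and for t ∈ [0, T] let s(t) be the smallest nonnegative real with ‖γ(t) + s(t) • (γ'(t)/‖γ'(t)‖)‖ = R. Suppose (t_k)_{k≥0} is a sequence in [0, T] with t₀ = 0 and σ(t_{k+1}) = σ(t_k) + s(t_k) for every k. Then the series ∑_{k=0}^∞ s(t_k) converges and ∑_{k=0}^∞ s(t_k) = L. -/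
/-- **Proposition 2.** The straight-line step lengths of the iterative ray-tracing
scheme along a planar central-force trajectory sum (as a convergent series) to the
total arclength `L` from the start point to the first boundary crossing. -/
theorem hasSum_step_lengths_arclength
    (R : ℝ) (hR : 0 < R)
    (γ : ℝ → EuclideanSpace ℝ (Fin 2)) (hγ : ContDiff ℝ 2 γ)
    (c : ℝ → ℝ) (hc : Continuous c) (hc0 : ∀ t, 0 ≤ c t)
    (hODE : ∀ t, deriv (deriv γ) t = -c t • γ t)
    (T : ℝ) (hT : 0 < T)
    (hv : ∀ t ∈ Set.Icc (0 : ℝ) T, deriv γ t ≠ 0)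
    (hin : ∀ t ∈ Set.Ico (0 : ℝ) T, ‖γ t‖ < R)
    (hbd : ‖γ T‖ = R)
    (σ : ℝ → ℝ) (hσ : ∀ t, σ t = ∫ u in (0 : ℝ)..t, ‖deriv γ u‖)
    (s : ℝ → ℝ)
    (hs : ∀ t ∈ Set.Icc (0 : ℝ) T,
      IsLeast {s' : ℝ | 0 ≤ s' ∧ ‖γ t + s' • (‖deriv γ t‖⁻¹ • deriv γ t)‖ = R} (s t))
    (tseq : ℕ → ℝ) (htmem : ∀ k, tseq k ∈ Set.Icc (0 : ℝ) T)
    (ht0 : tseq 0 = 0)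
    (hstep : ∀ k, σ (tseq (k + 1)) = σ (tseq k) + s (tseq k)) :
    HasSum (fun k : ℕ => s (tseq k)) (σ T) := by
  -- continuity facts
  have hderiv_cont : Continuous (deriv γ) := hγ.continuous_deriv one_le_two
  have hnorm_cont : Continuous fun u => ‖deriv γ u‖ := hderiv_cont.norm
  have hint : ∀ a b : ℝ, IntervalIntegrable (fun u => ‖deriv γ u‖) MeasureTheory.volume a b :=
    fun a b => hnorm_cont.intervalIntegrable a b
  have hσcont : Continuous σ := by
    have := intervalIntegral.continuous_primitive hint 0
    simpa [funext hσ] using this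
  -- monotonicity of σ
  have hmono : Monotone σ := by
    intro a b hab
    have h1 : σ a + ∫ u in a..b, ‖deriv γ u‖ = σ b := by
      rw [hσ, hσ]
      exact intervalIntegral.integral_add_adjacent_intervals (hint 0 a) (hint a b)
    have h2 : 0 ≤ ∫ u in a..b, ‖deriv γ u‖ :=
      intervalIntegral.integral_nonneg hab (fun u _ => norm_nonneg _)
    linarith
  -- nonnegativity and lower bound for s
  have hs0 : ∀ k, 0 ≤ s (tseq k) := fun k => ((hs _ (htmem k)).1).1
  have hlow : ∀ t ∈ Set.Icc (0 : ℝ) T, R - ‖γ t‖ ≤ s t := by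
    intro t ht
    obtain ⟨⟨hs0', heq⟩, -⟩ := hs t ht
    have hvnorm : ‖(‖deriv γ t‖⁻¹ • deriv γ t)‖ = 1 := by
      rw [norm_smul, norm_inv, norm_norm]
      exact inv_mul_cancel₀ (norm_ne_zero_iff.2 (hv t ht))
    have : R ≤ ‖γ t‖ + s t := by
      calc R = ‖γ t + s t • (‖deriv γ t‖⁻¹ • deriv γ t)‖ := heq.symm
        _ ≤ ‖γ t‖ + ‖s t • (‖deriv γ t‖⁻¹ • deriv γ t)‖ := norm_add_le _ _
        _ = ‖γ t‖ + s t := by rw [norm_smul, hvnorm, mul_one, Real.norm_eq_abs, abs_of_nonneg hs0']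
    linarith
  -- telescoping: partial sums = σ (tseq n)
  have hσ0 : σ 0 = 0 := by rw [hσ]; simp
  have key : ∀ n, ∑ k ∈ Finset.range n, s (tseq k) = σ (tseq n) := by
    intro n
    induction n with
    | zero => simp [ht0, hσ0]
    | succ n ih => rw [Finset.sum_range_succ, ih, hstep n]
  -- bound on partial sums
  have hbound : ∀ n, σ (tseq n) ≤ σ T := fun n => hmono (htmem n).2
  have hsummable : Summable fun k : ℕ => s (tseq k) := by
    apply summable_of_sum_range_le hs0
    intro n; rw [key]; exact hbound n
  obtain ⟨S, hS⟩ := hsummable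
  have htend : Filter.Tendsto (fun n => σ (tseq n)) Filter.atTop (nhds S) := by
    have := hS.tendsto_sum_nat
    simpa [funext key] using this
  have hSle : S ≤ σ T := le_of_tendsto htend (Filter.Eventually.of_forall hbound)
  -- show S = σ T
  rcases eq_or_lt_of_le hSle with hEq | hlt
  · rwa [hEq] at hS
  · exfalso
    obtain ⟨t', ht'mem, φ, hφ, hφtend⟩ :=
      (isCompact_Icc (a := (0:ℝ)) (b := T)).tendsto_subseq htmem
    have hσt' : σ t' = S :=
      tendsto_nhds_unique ((hσcont.tendsto t').comp hφtend) (htend.comp hφ.tendsto_atTop)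
    have ht'T : t' < T := by
      rcases lt_or_eq_of_le ht'mem.2 with h | h
      · exact h
      · exfalso; rw [h] at hσt'; linarith [hσt' ▸ hlt]
    have hγt' : ‖γ t'‖ < R := hin t' ⟨ht'mem.1, ht'T⟩
    have hs_tend : Filter.Tendsto (fun k => s (tseq (φ k))) Filter.atTop (nhds 0) :=
      (hS.summable.tendsto_atTop_zero).comp hφ.tendsto_atTop
    have hlow_tend : Filter.Tendsto (fun k => R - ‖γ (tseq (φ k))‖) Filter.atTop
        (nhds (R - ‖γ t'‖)) := by
      have : Continuous fun t => R - ‖γ t‖ := continuous_const.sub hγ.continuous.norm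
      exact (this.tendsto t').comp hφtend
    have : R - ‖γ t'‖ ≤ 0 :=
      le_of_tendsto_of_tendsto' hlow_tend hs_tend fun k => hlow _ (htmem (φ k))
    linarith
end

section
/- Let R > 0 and let γ : ℝ → EuclideanSpace ℝ (Fin 2) be twice continuously differentiable with γ''(t) = −c(t) • γ(t) for a continuous c ≥ 0, let T > 0 with γ'(t) ≠ 0 for all t ∈ [0, T], ‖γ(t)‖ < R for all t ∈ [0, T), and ‖γ(T)‖ = R. Define σ(t) = ∫₀ᵗ ‖γ'(u)‖ du, L = σ(T), and for t ∈ [0, T] let s(t) be the smallest nonnegative real with ‖γ(t) + s(t) • (γ'(t)/‖γ'(t)‖)‖ = R. Suppose (t_k)_{k≥0} is a sequence in [0, T] with t₀ = 0 and σ(t_{k+1}) = σ(t_k) + s(t_k) for every k. Then for every K ∈ ℕ, the partial sum satisfies ∑_{k=0}^{K−1} s(t_k) ≤ L. -/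
/-- Key intermediate claim in the proof of Proposition 2: every partial sum of the
tangent-line step lengths of the iterative ray-tracing scheme is bounded by the total
arclength `L = σ T` from the start point to the first boundary crossing. -/
theorem partial_sums_step_lengths_le_arclength
    (R : ℝ) (hR : 0 < R)
    (γ : ℝ → EuclideanSpace ℝ (Fin 2)) (hγ : ContDiff ℝ 2 γ)
    (c : ℝ → ℝ) (hc : Continuous c) (hc0 : ∀ t, 0 ≤ c t)
    (hODE : ∀ t, deriv (deriv γ) t = -c t • γ t)
    (T : ℝ) (hT : 0 < T)
    (hv : ∀ t ∈ Set.Icc (0 : ℝ) T, deriv γ t ≠ 0)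
    (hin : ∀ t ∈ Set.Ico (0 : ℝ) T, ‖γ t‖ < R)
    (hbd : ‖γ T‖ = R)
    (σ : ℝ → ℝ) (hσ : ∀ t, σ t = ∫ u in (0 : ℝ)..t, ‖deriv γ u‖)
    (s : ℝ → ℝ)
    (hs : ∀ t ∈ Set.Icc (0 : ℝ) T,
      IsLeast {s' : ℝ | 0 ≤ s' ∧ ‖γ t + s' • (‖deriv γ t‖⁻¹ • deriv γ t)‖ = R} (s t))
    (tseq : ℕ → ℝ) (htmem : ∀ k, tseq k ∈ Set.Icc (0 : ℝ) T)
    (ht0 : tseq 0 = 0)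
    (hstep : ∀ k, σ (tseq (k + 1)) = σ (tseq k) + s (tseq k)) :
    ∀ K : ℕ, ∑ k ∈ Finset.range K, s (tseq k) ≤ σ T := by
  have hcont : Continuous fun u => ‖deriv γ u‖ :=
    (hγ.continuous_deriv one_le_two).norm
  -- telescoping: partial sum equals σ (tseq K)
  have htel : ∀ K : ℕ, ∑ k ∈ Finset.range K, s (tseq k) = σ (tseq K) := by
    intro K
    induction K with
    | zero =>
      simp [ht0, hσ 0]
    | succ K ih =>
      rw [Finset.sum_range_succ, ih, hstep K]
  intro K
  rw [htel K]
  -- monotonicity of σ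
  have hmem := htmem K
  have h1 : σ T = σ (tseq K) + ∫ u in (tseq K)..T, ‖deriv γ u‖ := by
    rw [hσ, hσ]
    rw [intervalIntegral.integral_add_adjacent_intervals
      (hcont.intervalIntegrable _ _) (hcont.intervalIntegrable _ _)]
  have h2 : (0 : ℝ) ≤ ∫ u in (tseq K)..T, ‖deriv γ u‖ :=
    intervalIntegral.integral_nonneg hmem.2 (fun u _ => norm_nonneg _)
  linarith
end
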